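/- arXiv:1710.10572 — 2 statements merged into one kernel-verified Lean document; each statement's English description precedes it below -/
import Mathlib

section
/- For every natural number s ≥ 1, in ℤ[y,y⁻¹,z,z⁻¹][[q]] one has ∏_{ε₁,ε₂∈{±1}}(1 − q y^{ε₁} z^{ε₂}) · ∑_{σ=0}^{∞} q^σ χ_{2s+σ}(y) χ_σ(z) = χ_{2s}(y) − q χ_{2s−1}(y) χ_1(z) + q² χ_{2s−2}(y). (This is the character identity expressing that the chiral spin-s so(2,4) singleton D(s+1;(s,s)) decomposes as the multiplicity-free sum ⊕_{σ≥0} D_{so(2)⊕so(4)}(s+1+σ;(s+σ,s)).) -/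
/-- The two-variable Laurent polynomial ring ℤ[y,y⁻¹,z,z⁻¹], realised as
Laurent polynomials in `z` over Laurent polynomials in `y`. -/
noncomputable abbrev L2 : Type := LaurentPolynomial (LaurentPolynomial ℤ)

/-- The su(2) character `χ_n(y) = ∑_{k=0}^n y^{n-2k}`, in the variable `y`. -/
noncomputable def chiY (n : ℕ) : L2 :=
  LaurentPolynomial.C (∑ k ∈ Finset.range (n + 1), LaurentPolynomial.T ((n : ℤ) - 2 * k))

/-- The su(2) character `χ_n(z) = ∑_{k=0}^n z^{n-2k}`, in the variable `z`. -/
noncomputable def chiZv (n : ℕ) : L2 :=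
  ∑ k ∈ Finset.range (n + 1), LaurentPolynomial.T ((n : ℤ) - 2 * k)

/-- `y^{ε₁} z^{ε₂}` as an element of ℤ[y,y⁻¹,z,z⁻¹]. -/
noncomputable def yz (e₁ e₂ : ℤ) : L2 :=
  LaurentPolynomial.C (LaurentPolynomial.T e₁) * LaurentPolynomial.T e₂

/-- `∏_{ε₁,ε₂∈{±1}} (1 - q y^{ε₁} z^{ε₂})`, the inverse of the universal AdS₅
function `P₄(q,y,z)`, in ℤ[y,y⁻¹,z,z⁻¹][[q]]. -/
noncomputable def P4inv : PowerSeries L2 :=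
  (1 - PowerSeries.C (yz 1 1) * PowerSeries.X) *
  (1 - PowerSeries.C (yz 1 (-1)) * PowerSeries.X) *
  (1 - PowerSeries.C (yz (-1) 1) * PowerSeries.X) *
  (1 - PowerSeries.C (yz (-1) (-1)) * PowerSeries.X)

/-! With `x = χ₁(y)` and `w = χ₁(z)`, `P4inv = 1 - xwq + (x² + w² - 2)q² - xwq³ + q⁴`, and every
character obeys `χ_{n+2} = χ₁ χ_{n+1} - χ_n`. The product of a solution of
`a_{n+2} = x a_{n+1} - a_n` with one of `b_{n+2} = w b_{n+1} - b_n` satisfies the fourth-order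
recurrence read off from `P4inv` (its characteristic roots are the products `α^{±1} β^{±1}` of the
roots of the two quadratics). Hence multiplying `∑ a_{σ+2} b_σ q^σ` by `P4inv` kills every
coefficient from `q⁴` on, and the four remaining ones are computed from the recurrences. -/

open PowerSeries

section HadamardDenom

variable {R : Type*} [CommRing R]

/-- The common denominator of Hadamard products of series with denominators `1 - x X + X²` and
`1 - w X + X²`. -/
noncomputable def hadamardDenom (x w : R) : R⟦X⟧ :=
  1 - C (x * w) * X + C (x ^ 2 + w ^ 2 - 2) * X ^ 2 - C (x * w) * X ^ 3 + X ^ 4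

variable {x w : R} {a b : ℕ → R}

theorem coeff_hadamardDenom_mul (c : ℕ → R) (n : ℕ) :
    coeff n (hadamardDenom x w * mk c) =
      c n - (if 1 ≤ n then x * w * c (n - 1) else 0)
        + (if 2 ≤ n then (x ^ 2 + w ^ 2 - 2) * c (n - 2) else 0)
        - (if 3 ≤ n then x * w * c (n - 3) else 0)
        + (if 4 ≤ n then c (n - 4) else 0) := by
  nth_rewrite 1 [hadamardDenom, ← pow_one (X : R⟦X⟧)]
  simp only [sub_mul, add_mul, one_mul, mul_assoc, map_add, map_sub, coeff_C_mul,
    coeff_X_pow_mul', coeff_mk]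
  split_ifs <;> simp

theorem hadamardDenom_recurrence (ha : ∀ n, a (n + 2) = x * a (n + 1) - a n)
    (hb : ∀ n, b (n + 2) = w * b (n + 1) - b n) (n : ℕ) :
    a (n + 4) * b (n + 4) - x * w * (a (n + 3) * b (n + 3))
      + (x ^ 2 + w ^ 2 - 2) * (a (n + 2) * b (n + 2)) - x * w * (a (n + 1) * b (n + 1))
      + a n * b n = 0 := by
  rw [ha (n + 2), ha (n + 1), ha n, hb (n + 2), hb (n + 1), hb n]
  ring

theorem hadamardDenom_mul_mk (ha : ∀ n, a (n + 2) = x * a (n + 1) - a n)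
    (hb : ∀ n, b (n + 2) = w * b (n + 1) - b n) (hb₀ : b 0 = 1) (hb₁ : b 1 = w) :
    hadamardDenom x w * mk (fun n => a (n + 2) * b n) =
      C (a 2) - C (a 1 * w) * X + C (a 0) * X ^ 2 := by
  have ha₂ : a 2 = x * a 1 - a 0 := ha 0
  have ha₃ : a 3 = x * a 2 - a 1 := ha 1
  have ha₄ : a 4 = x * a 3 - a 2 := ha 2
  have ha₅ : a 5 = x * a 4 - a 3 := ha 3
  have hb₂ : b 2 = w * b 1 - b 0 := hb 0
  have hb₃ : b 3 = w * b 2 - b 1 := hb 1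
  ext n
  rw [coeff_hadamardDenom_mul]
  rcases n with _ | _ | _ | _ | n
  · simp [hb₀]
  · have h : a 3 * b 1 - x * w * (a 2 * b 0) = -(a 1 * w) := by
      rw [ha₃, hb₁, hb₀]; ring
    simpa using h
  · have h : a 4 * b 2 - x * w * (a 3 * b 1) + (x ^ 2 + w ^ 2 - 2) * (a 2 * b 0) = a 0 := by
      rw [ha₄, ha₃, ha₂, hb₂, hb₁, hb₀]; ring
    simpa using h
  · have h : a 5 * b 3 - x * w * (a 4 * b 2) + (x ^ 2 + w ^ 2 - 2) * (a 3 * b 1)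
        - x * w * (a 2 * b 0) = 0 := by
      rw [ha₅, ha₄, ha₃, ha₂, hb₃, hb₂, hb₁, hb₀]; ring
    simpa using h
  · simpa using hadamardDenom_recurrence (a := fun k => a (k + 2)) (fun k => ha (k + 2)) hb n
theorem prod_one_sub_C_mul_X_eq_hadamardDenom {α α' β β' : R} (hα : α * α' = 1)
    (hβ : β * β' = 1) :
    (1 - C (α * β) * X) * (1 - C (α * β') * X) * (1 - C (α' * β) * X) * (1 - C (α' * β') * X) =
      hadamardDenom (α + α') (β + β') := by
  have pair : ∀ u v : R, u * v = 1 →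
      (1 - C u * X) * (1 - C v * X) = 1 - C (u + v) * X + X ^ 2 := by
    intro u v huv
    have hC : C u * C v = (1 : R⟦X⟧) := by rw [← map_mul, huv, map_one]
    rw [map_add]
    linear_combination X ^ 2 * hC
  calc _ = (1 - C (α * β) * X) * (1 - C (α' * β') * X) *
        ((1 - C (α * β') * X) * (1 - C (α' * β) * X)) := by ring
    _ = (1 - C (α * β + α' * β') * X + X ^ 2) * (1 - C (α * β' + α' * β) * X + X ^ 2) := by
      rw [pair _ _ (by linear_combination β * β' * hα + hβ),
        pair _ _ (by linear_combination β * β' * hα + hβ)]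
    _ = hadamardDenom (α + α') (β + β') := by
      have hsum : α * β + α' * β' + (α * β' + α' * β) = (α + α') * (β + β') := by ring
      have hprod : (α * β + α' * β') * (α * β' + α' * β) + 2 =
          (α + α') ^ 2 + (β + β') ^ 2 - 2 := by
        linear_combination (α ^ 2 + α' ^ 2 - 2) * hβ + (β ^ 2 + β' ^ 2 - 2) * hα
      rw [hadamardDenom, ← hsum, ← hprod]
      simp only [map_add, map_mul, map_ofNat]
      ring
end HadamardDenom

section Character
open LaurentPolynomial

variable (R : Type*) [CommRing R]

noncomputable def su2Char (n : ℕ) : R[T;T⁻¹] :=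
  ∑ k ∈ Finset.range (n + 1), T ((n : ℤ) - 2 * k)

theorem su2Char_zero : su2Char R 0 = 1 := by simp [su2Char]

theorem su2Char_one : su2Char R 1 = T 1 + T (-1) := by simp [su2Char, Finset.sum_range_succ]

theorem su2Char_succ (n : ℕ) : su2Char R (n + 1) = T 1 * su2Char R n + T (-(n + 1)) := by
  rw [su2Char, Finset.sum_range_succ, su2Char, Finset.mul_sum]
  congr 1
  · refine Finset.sum_congr rfl fun k _ => ?_
    rw [← T_add]
    push_cast
    ring_nf
  · push_cast
    ring_nf

theorem su2Char_add_two (n : ℕ) :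
    su2Char R (n + 2) = su2Char R 1 * su2Char R (n + 1) - su2Char R n := by
  have h₁ := su2Char_succ R (n + 1)
  have h₀ := su2Char_succ R n
  have hinv : (T (-1) : R[T;T⁻¹]) * T 1 = 1 := by rw [← T_add]; simp
  have hshift : (T (-1) : R[T;T⁻¹]) * T (-(n + 1)) = T (-(n + 1 + 1)) := by
    rw [← T_add]; ring_nf
  push_cast at h₁
  rw [su2Char_one]
  linear_combination h₁ - T (-1) * h₀ - su2Char R n * hinv - hshift

end Character

theorem chiY_eq_C_su2Char (n : ℕ) : chiY n = LaurentPolynomial.C (su2Char ℤ n) := rfl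

theorem chiZv_eq_su2Char (n : ℕ) : chiZv n = su2Char (LaurentPolynomial ℤ) n := rfl

open LaurentPolynomial in
theorem P4inv_eq_hadamardDenom : P4inv = hadamardDenom (chiY 1) (chiZv 1) := by
  have hy : (LaurentPolynomial.C (T 1) : L2) * LaurentPolynomial.C (T (-1)) = 1 := by
    rw [← map_mul, ← T_add]; simp
  have hz : (T 1 : L2) * T (-1) = 1 := by rw [← T_add]; simp
  rw [chiY_eq_C_su2Char, chiZv_eq_su2Char, su2Char_one, su2Char_one, map_add,
    ← prod_one_sub_C_mul_X_eq_hadamardDenom hy hz]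
  rfl

theorem chiY_add_two (n : ℕ) : chiY (n + 2) = chiY 1 * chiY (n + 1) - chiY n := by
  simp only [chiY_eq_C_su2Char, su2Char_add_two, map_sub, map_mul]

theorem chiZv_add_two (n : ℕ) : chiZv (n + 2) = chiZv 1 * chiZv (n + 1) - chiZv n :=
  su2Char_add_two _ n

theorem chiZv_zero : chiZv 0 = 1 := su2Char_zero _

/-- Character identity expressing that the chiral spin-s so(2,4) singleton `D(s+1;(s,s)₊)`
decomposes multiplicity-free as `⊕_{σ≥0} D_{so(2)⊕so(4)}(s+1+σ;(s+σ,s))`: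
`P₄⁻¹ · ∑_{σ≥0} q^σ χ_{2s+σ}(y)χ_σ(z) = χ_{2s}(y) - q χ_{2s-1}(y)χ₁(z) + q² χ_{2s-2}(y)`. -/
theorem chiral_singleton_decomposition (s : ℕ) (hs : 1 ≤ s) :
    P4inv * PowerSeries.mk (fun σ => chiY (2 * s + σ) * chiZv σ) =
    PowerSeries.C (chiY (2 * s)) -
      PowerSeries.C (chiY (2 * s - 1) * chiZv 1) * PowerSeries.X +
      PowerSeries.C (chiY (2 * s - 2)) * PowerSeries.X ^ 2 := by
  have key := hadamardDenom_mul_mk (a := fun n => chiY (2 * s - 2 + n))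
    (fun n => chiY_add_two _) chiZv_add_two chiZv_zero rfl
  have hσ : ∀ σ, 2 * s - 2 + (σ + 2) = 2 * s + σ := fun σ => by omega
  have h₁ : 2 * s - 2 + 1 = 2 * s - 1 := by omega
  simp only [hσ, h₁, add_zero] at key
  rw [P4inv_eq_hadamardDenom]
  exact key
end

section
/- For every natural number s ≥ 1, in ℤ[x,x⁻¹][[q]] one has (1 − q)(1 − qx)(1 − qx⁻¹) · ∑_{σ=0}^{∞} q^σ ∑_{k=0}^{σ} χ_{s+k}(x) = χ_s(x) − q χ_{s−1}(x). (Character form of the branching rule: the so(2,4) spin-s singleton D(s+1;(s,s)) restricts to the single so(2,3) massless spin-s module D(s+1;(s)).) -/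
/-!
Multiplying by `1 - q` turns the partial sums `∑_{k ≤ σ} χ_{s+k}` into the series
`∑_σ χ_{s+σ} q^σ`. The characters satisfy the Chebyshev recurrence
`χ_{n+2} = (x + x⁻¹) χ_{n+1} - χ_n`, whose characteristic polynomial is
`(1 - qx)(1 - qx⁻¹) = 1 - (x + x⁻¹) q + q²`; multiplying by it therefore kills every
coefficient of order `≥ 2` and leaves `χ_s + (χ_{s+1} - (x + x⁻¹) χ_s) q = χ_s - χ_{s-1} q`.
-/

/-- The so(3) character `χ_n(x) = ∑_{k=0}^n x^{n-2k}` in ℤ[x,x⁻¹]. -/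
noncomputable def chi (n : ℕ) : LaurentPolynomial ℤ :=
  ∑ k ∈ Finset.range (n + 1), LaurentPolynomial.T ((n : ℤ) - 2 * k)

open PowerSeries
open Finset (range sum_range_succ mul_sum sum_congr)
open LaurentPolynomial (T T_add T_zero)

namespace PowerSeries

variable {R : Type*} [CommRing R]

theorem one_sub_X_mul_mk_sum_range (a : ℕ → R) :
    (1 - X) * mk (fun n => ∑ k ∈ range (n + 1), a k) = mk a := by
  ext (_ | n)
  · simp
  · simp [sub_mul, coeff_succ_X_mul, sum_range_succ]

theorem one_sub_C_mul_X_mul_one_sub_C_mul_X_mul_mk (α β : R) (a : ℕ → R)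
    (h : ∀ n, a (n + 2) = (α + β) * a (n + 1) - α * β * a n) :
    (1 - C α * X) * (1 - C β * X) * mk a = C (a 0) + C (a 1 - (α + β) * a 0) * X := by
  have hfactor :
      (1 - C α * X) * (1 - C β * X) = 1 - X * C (α + β) + X * (X * C (α * β)) := by
    simp only [map_add, map_mul]; ring
  rw [hfactor]
  ext (_ | _ | n)
  · simp
  · simp [add_mul, sub_mul, mul_assoc, coeff_succ_X_mul]
  · simp [add_mul, sub_mul, mul_assoc, coeff_succ_X_mul, h]

end PowerSeries

theorem chi_succ (n : ℕ) : chi (n + 1) = T 1 * chi n + T (-(n + 1 : ℤ)) := by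
  rw [chi, sum_range_succ, chi, mul_sum]
  congr 1
  · refine sum_congr rfl fun k _ => ?_
    rw [← T_add]; push_cast; ring_nf
  · push_cast; ring_nf

theorem T_one_mul_T_neg_one : (T 1 * T (-1) : LaurentPolynomial ℤ) = 1 := by
  rw [← T_add, add_neg_cancel, T_zero]

theorem chi_add_two (n : ℕ) : chi (n + 2) = (T 1 + T (-1)) * chi (n + 1) - chi n := by
  have hT : (T (-1) : LaurentPolynomial ℤ) * T (-(n + 1 : ℤ)) = T (-((n + 1 : ℕ) + 1 : ℤ)) := by
    rw [← T_add]; push_cast; ring_nf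
  linear_combination chi_succ (n + 1) - T (-1) * chi_succ n - hT - chi n * T_one_mul_T_neg_one

/-- Branching of the so(2,4) spin-s singleton onto so(2,3), in character form:
`(1-q)(1-qx)(1-qx⁻¹) · ∑_{σ≥0} q^σ ∑_{k=0}^{σ} χ_{s+k}(x) = χ_s(x) - q χ_{s-1}(x)`. -/
theorem singleton_branching (s : ℕ) (hs : 1 ≤ s) :
    (1 - PowerSeries.X) *
      (1 - PowerSeries.C (R := LaurentPolynomial ℤ) (LaurentPolynomial.T 1) * PowerSeries.X) *
      (1 - PowerSeries.C (R := LaurentPolynomial ℤ) (LaurentPolynomial.T (-1)) * PowerSeries.X) *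
      PowerSeries.mk (fun σ => ∑ k ∈ Finset.range (σ + 1), chi (s + k)) =
    PowerSeries.C (R := LaurentPolynomial ℤ) (chi s) -
      PowerSeries.C (R := LaurentPolynomial ℤ) (chi (s - 1)) * PowerSeries.X := by
  obtain ⟨m, rfl⟩ : ∃ m, s = m + 1 := ⟨s - 1, by omega⟩
  have hrec (n : ℕ) : chi (m + 1 + (n + 2)) =
      (T 1 + T (-1)) * chi (m + 1 + (n + 1)) - T 1 * T (-1) * chi (m + 1 + n) := by
    rw [T_one_mul_T_neg_one, one_mul]
    exact chi_add_two (m + 1 + n)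
  have hseries := one_sub_C_mul_X_mul_one_sub_C_mul_X_mul_mk (T 1) (T (-1))
    (fun n => chi (m + 1 + n)) hrec
  have hcoeff : chi (m + 1 + 1) - (T 1 + T (-1)) * chi (m + 1 + 0) = -chi m := by
    rw [chi_add_two]; ring
  rw [← one_sub_X_mul_mk_sum_range, hcoeff, add_zero, map_neg] at hseries
  rw [Nat.add_sub_cancel]
  linear_combination hseries
end
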